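/- arXiv:0901.4480 — 5 statements merged into one kernel-verified Lean document; each statement's English description precedes it below -/
import Mathlib

section
/- Let A be a Keigher ring, i.e., a differential ring in which the radical of every differential ideal is a differential ideal. Then for every differential ideal I of A and every multiplicative set S disjoint from I, there exists a prime differential ideal containing I and disjoint from S which is maximal among differential ideals disjoint from S. -/
/-!
Take, by Zorn's lemma, a differential ideal `p ⊇ I` maximal among those disjoint from `S`.
Its radical is again differential (Keigher) and disjoint from `S`, so `p` is radical.
For a radical differential ideal the Leibniz rule gives `x * y ∈ p → x * d y ∈ p`, because
`(x * d y) ^ 2 = x * d y * d (x * y) - x * y * (d x * d y)`; hence every colon ideal `p : a`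
is differential. If `a * b ∈ p` with `a, b ∉ p`, maximality applied to `p : a ∋ b` yields
`s ∈ S` with `s * a ∈ p`, and then applied to `p : s ∋ a` yields `t ∈ S` with `t * s ∈ p`,
a contradiction.
-/

namespace Ideal

variable {A : Type*} [CommRing A]

def IsDifferential (d : A → A) (J : Ideal A) : Prop :=
  ∀ a ∈ J, d a ∈ J

theorem exists_le_maximal_isDifferential_disjoint (d : A → A) {I : Ideal A}
    (hI : I.IsDifferential d) {S : Submonoid A} (hdisj : ∀ s ∈ S, s ∉ I) :
    ∃ p, I ≤ p ∧ Maximal (fun J : Ideal A => J.IsDifferential d ∧ ∀ s ∈ S, s ∉ J) p := by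
  refine zorn_le_nonempty₀ _ (fun c hc hchain J hJc => ?_) I ⟨hI, hdisj⟩
  have mem_sSup : ∀ {x}, x ∈ sSup c ↔ ∃ K ∈ c, x ∈ K :=
    Submodule.mem_sSup_of_directed ⟨J, hJc⟩ hchain.directedOn
  refine ⟨sSup c, ⟨fun a ha => ?_, fun s hs hsc => ?_⟩, fun K hK => le_sSup hK⟩
  · obtain ⟨K, hKc, haK⟩ := mem_sSup.mp ha
    exact mem_sSup.mpr ⟨K, hKc, (hc hKc).1 a haK⟩
  · obtain ⟨K, hKc, hsK⟩ := mem_sSup.mp hsc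
    exact (hc hKc).2 s hs hsK

variable {d : A → A} {p : Ideal A} {S : Submonoid A}

theorem isRadical_of_maximal_isDifferential_disjoint (hrad : p.radical.IsDifferential d)
    (hmax : Maximal (fun J : Ideal A => J.IsDifferential d ∧ ∀ s ∈ S, s ∉ J) p) :
    p.IsRadical := by
  refine hmax.2 ⟨hrad, fun s hs hsr => ?_⟩ le_radical
  obtain ⟨n, hn⟩ := mem_radical_iff.mp hsr
  exact hmax.1.2 _ (pow_mem hs n) hn

theorem IsDifferential.mul_deriv_mem_of_mul_mem (hmul : ∀ a b : A, d (a * b) = a * d b + b * d a)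
    (hp : p.IsDifferential d) (hrad : p.IsRadical) {x y : A} (hxy : x * y ∈ p) :
    x * d y ∈ p := by
  have hsq : (x * d y) ^ 2 = x * d y * d (x * y) - x * y * (d x * d y) := by
    rw [hmul]; ring
  refine hrad ⟨2, ?_⟩
  rw [hsq]
  exact sub_mem (p.mul_mem_left _ (hp _ hxy)) (p.mul_mem_right _ hxy)

theorem IsDifferential.colon_singleton (hmul : ∀ a b : A, d (a * b) = a * d b + b * d a)
    (hp : p.IsDifferential d) (hrad : p.IsRadical) (a : A) :
    (p.colon {a}).IsDifferential d := by
  intro x hx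
  rw [Submodule.mem_colon_singleton, smul_eq_mul, mul_comm] at hx ⊢
  exact hp.mul_deriv_mem_of_mul_mem hmul hrad hx

theorem isPrime_of_maximal_isDifferential_disjoint
    (hmul : ∀ a b : A, d (a * b) = a * d b + b * d a) (hrad : p.IsRadical)
    (hmax : Maximal (fun J : Ideal A => J.IsDifferential d ∧ ∀ s ∈ S, s ∉ J) p) :
    p.IsPrime := by
  obtain ⟨hp, hpS⟩ := hmax.1
  have exists_mul_mem : ∀ a b, a * b ∈ p → b ∉ p → ∃ s ∈ S, s * a ∈ p := by
    intro a b hab hb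
    by_contra! hS
    have hcolon : p.colon {a} ≤ p :=
      hmax.2 ⟨hp.colon_singleton hmul hrad a, fun s hs h => hS s hs
        (by simpa using Submodule.mem_colon_singleton.mp h)⟩
        fun x hx => Submodule.mem_colon_singleton.mpr (p.mul_mem_right a hx)
    exact hb (hcolon (Submodule.mem_colon_singleton.mpr (by rwa [smul_eq_mul, mul_comm])))
  refine ⟨fun htop => hpS 1 S.one_mem (htop ▸ Submodule.mem_top), fun {a b} hab => ?_⟩
  by_contra! ⟨ha, hb⟩
  obtain ⟨s, hs, hsa⟩ := exists_mul_mem a b hab hb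
  obtain ⟨t, ht, hts⟩ := exists_mul_mem s a hsa ha
  exact hpS _ (S.mul_mem ht hs) hts

end Ideal

open Ideal in
theorem keigher_prime_max_differential_ideal_general (A : Type*) [CommRing A] (d : A → A)
    (hmul : ∀ a b : A, d (a * b) = a * d b + b * d a)
    (hKeigher : ∀ J : Ideal A, (∀ a ∈ J, d a ∈ J) → ∀ a ∈ J.radical, d a ∈ J.radical)
    (I : Ideal A) (hI : ∀ a ∈ I, d a ∈ I)
    (S : Submonoid A) (hdisj : ∀ s ∈ S, s ∉ I) :
    ∃ p : Ideal A, p.IsPrime ∧ (∀ a ∈ p, d a ∈ p) ∧ I ≤ p ∧ (∀ s ∈ S, s ∉ p) ∧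
      (∀ J : Ideal A, (∀ a ∈ J, d a ∈ J) → (∀ s ∈ S, s ∉ J) → p ≤ J → J = p) := by
  obtain ⟨p, hIp, hmax⟩ := exists_le_maximal_isDifferential_disjoint d hI hdisj
  have hrad := isRadical_of_maximal_isDifferential_disjoint (hKeigher p hmax.1.1) hmax
  exact ⟨p, isPrime_of_maximal_isDifferential_disjoint hmul hrad hmax, hmax.1.1, hIp, hmax.1.2,
    fun J hJ hJS hpJ => le_antisymm (hmax.2 ⟨hJ, hJS⟩ hpJ) hpJ⟩

/-- In a Keigher ring, for every differential ideal `I` and multiplicative set `S`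
disjoint from `I`, there exists a prime differential ideal containing `I`,
disjoint from `S`, and maximal among differential ideals disjoint from `S`. -/
theorem keigher_prime_max_differential_ideal (A : Type*) [CommRing A] (d : A → A)
    (hadd : ∀ a b : A, d (a + b) = d a + d b)
    (hmul : ∀ a b : A, d (a * b) = a * d b + b * d a)
    (hKeigher : ∀ J : Ideal A, (∀ a ∈ J, d a ∈ J) → ∀ a ∈ J.radical, d a ∈ J.radical)
    (I : Ideal A) (hI : ∀ a ∈ I, d a ∈ I)
    (S : Submonoid A) (hdisj : ∀ s ∈ S, s ∉ I) :
    ∃ p : Ideal A, p.IsPrime ∧ (∀ a ∈ p, d a ∈ p) ∧ I ≤ p ∧ (∀ s ∈ S, s ∉ p) ∧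
      (∀ J : Ideal A, (∀ a ∈ J, d a ∈ J) → (∀ s ∈ S, s ∉ J) → p ≤ J → J = p) :=
  keigher_prime_max_differential_ideal_general A d hmul hKeigher I hI S hdisj
end

section
/- Let A be a differential ring and define the differential core of an ideal I as I♯ = {a ∈ I : ∂ⁿ(a) ∈ I for all n ≥ 0}. If A is a Keigher ring (the radical of every differential ideal is a differential ideal), then for every prime ideal p of A, the differential core p♯ is a prime differential ideal. -/
/-!
The core `p♯` is an ideal by the Leibniz rule, contained in `p` and stable under `∂`, so by the
Keigher property its radical `R` is a radical differential ideal inside `p`. In a radical differential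
ideal, `x * y ∈ R` forces `x * ∂y ∈ R`, since `(x ∂y)² = x ∂y · ∂(xy) - xy · ∂x ∂y`. Iterating,
`a * b ∈ p♯` gives `∂ᵐa * ∂ⁿb ∈ R ⊆ p` for all `m, n`, and primality of `p` makes `a` or `b` lie in `p♯`.
-/

namespace Derivation

section CommSemiring

variable {R A : Type*} [CommSemiring R] [CommSemiring A] [Algebra R A] (D : Derivation R A A)

theorem iterate_mul_mem_of_forall_iterate_mem {I : Ideal A} {a : A} (ha : ∀ k, D^[k] a ∈ I)
    (n : ℕ) (c : A) : D^[n] (c * a) ∈ I := by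
  induction n generalizing a c with
  | zero => exact I.mul_mem_left c (ha 0)
  | succ n ih =>
    have hDa (k : ℕ) : D^[k] (D a) ∈ I := ha (k + 1)
    rw [Function.iterate_succ_apply, leibniz, smul_eq_mul, smul_eq_mul, iterate_map_add,
      mul_comm a]
    exact I.add_mem (ih hDa c) (ih ha (D c))

def differentialCore (I : Ideal A) : Ideal A where
  carrier := {a | ∀ n, D^[n] a ∈ I}
  add_mem' ha hb n := by
    rw [iterate_map_add]
    exact I.add_mem (ha n) (hb n)
  zero_mem' n := by
    rw [iterate_map_zero]
    exact I.zero_mem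
  smul_mem' c _ ha n := D.iterate_mul_mem_of_forall_iterate_mem ha n c

variable {D} {I : Ideal A} {a : A}

theorem mem_differentialCore : a ∈ D.differentialCore I ↔ ∀ n, D^[n] a ∈ I := Iff.rfl

theorem differentialCore_le : D.differentialCore I ≤ I := fun _ ha => ha 0

theorem map_mem_differentialCore (ha : a ∈ D.differentialCore I) : D a ∈ D.differentialCore I :=
  fun n => ha (n + 1)

end CommSemiring

section CommRing

variable {R A : Type*} [CommSemiring R] [CommRing A] [Algebra R A] {D : Derivation R A A}
  {J : Ideal A}

theorem mul_map_mem_of_mul_mem (hJ : J.IsRadical) (hDJ : ∀ a ∈ J, D a ∈ J) {x y : A}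
    (hxy : x * y ∈ J) : x * D y ∈ J := by
  have hsq : (x * D y) ^ 2 = x * D y * D (x * y) - x * y * (D x * D y) := by
    rw [leibniz, smul_eq_mul, smul_eq_mul]
    ring
  refine hJ ⟨2, ?_⟩
  rw [hsq]
  exact J.sub_mem (J.mul_mem_left _ (hDJ _ hxy)) (J.mul_mem_right _ hxy)

theorem mul_iterate_mem_of_mul_mem (hJ : J.IsRadical) (hDJ : ∀ a ∈ J, D a ∈ J) {x y : A}
    (hxy : x * y ∈ J) (n : ℕ) : x * D^[n] y ∈ J := by
  induction n with
  | zero => exact hxy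
  | succ n ih =>
    rw [Function.iterate_succ_apply']
    exact mul_map_mem_of_mul_mem hJ hDJ ih

theorem iterate_mul_iterate_mem_of_mul_mem (hJ : J.IsRadical) (hDJ : ∀ a ∈ J, D a ∈ J)
    {x y : A} (hxy : x * y ∈ J) (m n : ℕ) : D^[m] x * D^[n] y ∈ J := by
  have hyx : D^[n] y * x ∈ J := mul_comm x (D^[n] y) ▸ mul_iterate_mem_of_mul_mem hJ hDJ hxy n
  exact mul_comm (D^[n] y) (D^[m] x) ▸ mul_iterate_mem_of_mul_mem hJ hDJ hyx m

theorem isPrime_differentialCore {p : Ideal A} (hp : p.IsPrime)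
    (hrad : ∀ a ∈ (D.differentialCore p).radical, D a ∈ (D.differentialCore p).radical) :
    (D.differentialCore p).IsPrime := by
  refine ⟨fun htop => hp.ne_top (top_le_iff.mp (htop ▸ differentialCore_le)), ?_⟩
  intro a b hab
  by_contra! hnot
  obtain ⟨m, hm⟩ := not_forall.mp hnot.1
  obtain ⟨n, hn⟩ := not_forall.mp hnot.2
  have hmn : D^[m] a * D^[n] b ∈ (D.differentialCore p).radical :=
    iterate_mul_iterate_mem_of_mul_mem (Ideal.radical_isRadical _) hrad (Ideal.le_radical hab) m n
  rcases hp.mem_or_mem ((hp.radical_le_iff.mpr differentialCore_le) hmn) with h | h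
  exacts [hm h, hn h]

end CommRing

end Derivation

/-- In a Keigher ring, the differential core `p♯ = {a : ∀ n, ∂ⁿ a ∈ p}` of a
prime ideal `p` is a prime differential ideal. -/
theorem keigher_differential_core_prime (A : Type*) [CommRing A] (d : A → A)
    (hadd : ∀ a b : A, d (a + b) = d a + d b)
    (hmul : ∀ a b : A, d (a * b) = a * d b + b * d a)
    (hKeigher : ∀ J : Ideal A, (∀ a ∈ J, d a ∈ J) → ∀ a ∈ J.radical, d a ∈ J.radical)
    (p : Ideal A) (hp : p.IsPrime) :
    ∃ q : Ideal A, (↑q = {a : A | ∀ n : ℕ, d^[n] a ∈ p}) ∧ q.IsPrime ∧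
      ∀ a ∈ q, d a ∈ q := by
  let D : Derivation ℤ A A := Derivation.mk' (AddMonoidHom.mk' d hadd).toIntLinearMap hmul
  have hcore_diff : ∀ a ∈ D.differentialCore p, D a ∈ D.differentialCore p :=
    fun _ => Derivation.map_mem_differentialCore
  exact ⟨D.differentialCore p, rfl,
    Derivation.isPrime_differentialCore hp (hKeigher _ hcore_diff), hcore_diff⟩
end

section
/- If A is a Keigher ring and I is a differential ideal, then the quotient differential ring A/I is a Keigher ring. -/
section

variable {A B : Type*} [CommRing A] [CommRing B] {f : A →+* B} {d : A → A} {D : B → B}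

theorem Ideal.comap_invariant (hD : ∀ a, D (f a) = f (d a)) {J : Ideal B}
    (hJ : ∀ x ∈ J, D x ∈ J) : ∀ a ∈ J.comap f, d a ∈ J.comap f := fun a ha => by
  simpa only [Ideal.mem_comap, ← hD] using hJ (f a) ha

theorem Ideal.radical_invariant_of_surjective (hf : Function.Surjective f)
    (hD : ∀ a, D (f a) = f (d a))
    (hKeigher : ∀ J : Ideal A, (∀ a ∈ J, d a ∈ J) → ∀ a ∈ J.radical, d a ∈ J.radical)
    (J : Ideal B) (hJ : ∀ x ∈ J, D x ∈ J) : ∀ x ∈ J.radical, D x ∈ J.radical := by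
  intro x hx
  obtain ⟨a, rfl⟩ := hf x
  have ha : a ∈ (J.comap f).radical := by rwa [← Ideal.comap_radical]
  have hda := hKeigher _ (Ideal.comap_invariant hD hJ) a ha
  rwa [← Ideal.comap_radical, Ideal.mem_comap, ← hD] at hda

end

theorem keigher_quotient_general (A : Type*) [CommRing A] (d : A → A)
    (hKeigher : ∀ J : Ideal A, (∀ a ∈ J, d a ∈ J) → ∀ a ∈ J.radical, d a ∈ J.radical)
    (I : Ideal A)
    (D : A ⧸ I → A ⧸ I)
    (hD : ∀ a : A, D (Ideal.Quotient.mk I a) = Ideal.Quotient.mk I (d a)) :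
    ∀ J : Ideal (A ⧸ I), (∀ x ∈ J, D x ∈ J) → ∀ x ∈ J.radical, D x ∈ J.radical :=
  Ideal.radical_invariant_of_surjective Ideal.Quotient.mk_surjective hD hKeigher

/-- If `A` is a Keigher ring and `I` a differential ideal, then the quotient
differential ring `A ⧸ I` is a Keigher ring. -/
theorem keigher_quotient (A : Type*) [CommRing A] (d : A → A)
    (hadd : ∀ a b : A, d (a + b) = d a + d b)
    (hmul : ∀ a b : A, d (a * b) = a * d b + b * d a)
    (hKeigher : ∀ J : Ideal A, (∀ a ∈ J, d a ∈ J) → ∀ a ∈ J.radical, d a ∈ J.radical)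
    (I : Ideal A) (hI : ∀ a ∈ I, d a ∈ I)
    (D : A ⧸ I → A ⧸ I)
    (hD : ∀ a : A, D (Ideal.Quotient.mk I a) = Ideal.Quotient.mk I (d a)) :
    ∀ J : Ideal (A ⧸ I), (∀ x ∈ J, D x ∈ J) → ∀ x ∈ J.radical, D x ∈ J.radical :=
  keigher_quotient_general A d hKeigher I D hD
end

section
/- If A is a Keigher ring and S ⊆ A is a multiplicative subset, then the localization S⁻¹A, with the induced derivation ∂(a/s) = (∂a·s − a·∂s)/s², is a Keigher ring. -/
/-!
Write `x ∈ √J` as `a / s`. The contraction of `J` to `A` is differential, and `a` lies in its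
radical because `a = s x`; the Keigher property of `A` then puts `∂a` in that radical. Finally
`∂a = s ∂x + x ∂s` with `x ∂s ∈ √J`, so `s ∂x ∈ √J`, and `s` is a unit.
-/

namespace Ideal

theorem map_mem_comap_of_semiconj {A B : Type*} [CommRing A] [CommRing B] (f : A →+* B)
    {d : A → A} {D : B → B} (hfdD : Function.Semiconj f d D) {J : Ideal B}
    (hJ : ∀ x ∈ J, D x ∈ J) : ∀ a ∈ J.comap f, d a ∈ J.comap f := fun a ha => by
  rw [mem_comap, hfdD a]
  exact hJ _ ha

theorem mem_radical_of_map_unit_mul_mem_radical {B : Type*} [CommRing B] {D : B → B}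
    (hDmul : ∀ x y : B, D (x * y) = x * D y + y * D x) {J : Ideal B} {u x : B}
    (hu : IsUnit u) (hx : x ∈ J.radical) (hDux : D (u * x) ∈ J.radical) :
    D x ∈ J.radical := by
  have huDx : u * D x = D (u * x) - x * D u := by rw [hDmul]; ring
  rw [← unit_mul_mem_iff_mem _ hu, huDx]
  exact J.radical.sub_mem hDux (J.radical.mul_mem_right _ hx)

end Ideal

theorem keigher_localization_general (A : Type*) [CommRing A] (d : A → A)
    (hKeigher : ∀ J : Ideal A, (∀ a ∈ J, d a ∈ J) → ∀ a ∈ J.radical, d a ∈ J.radical)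
    (S : Submonoid A)
    (D : Localization S → Localization S)
    (hDmul : ∀ x y : Localization S, D (x * y) = x * D y + y * D x)
    (hDcompat : ∀ a : A, D (algebraMap A (Localization S) a)
        = algebraMap A (Localization S) (d a)) :
    ∀ J : Ideal (Localization S), (∀ x ∈ J, D x ∈ J) →
      ∀ x ∈ J.radical, D x ∈ J.radical := by
  intro J hJ x hx
  obtain ⟨⟨a, s⟩, rfl⟩ := IsLocalization.mk'_surjective S x
  have hsx := IsLocalization.mk'_spec' (Localization S) a s
  have ha : a ∈ (J.comap (algebraMap A _)).radical := by
    rw [← Ideal.comap_radical, Ideal.mem_comap, ← hsx]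
    exact J.radical.mul_mem_left _ hx
  have hda := hKeigher _
    (Ideal.map_mem_comap_of_semiconj _ (fun a => (hDcompat a).symm) hJ) a ha
  rw [← Ideal.comap_radical, Ideal.mem_comap] at hda
  refine Ideal.mem_radical_of_map_unit_mul_mem_radical hDmul
    (IsLocalization.map_units _ s) hx ?_
  rwa [hsx, hDcompat]

/-- If `A` is a Keigher ring and `S ⊆ A` a multiplicative subset, then the
localization `S⁻¹A`, with the induced derivation, is a Keigher ring. -/
theorem keigher_localization (A : Type*) [CommRing A] (d : A → A)
    (hadd : ∀ a b : A, d (a + b) = d a + d b)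
    (hmul : ∀ a b : A, d (a * b) = a * d b + b * d a)
    (hKeigher : ∀ J : Ideal A, (∀ a ∈ J, d a ∈ J) → ∀ a ∈ J.radical, d a ∈ J.radical)
    (S : Submonoid A)
    (D : Localization S → Localization S)
    (hDadd : ∀ x y : Localization S, D (x + y) = D x + D y)
    (hDmul : ∀ x y : Localization S, D (x * y) = x * D y + y * D x)
    (hDcompat : ∀ a : A, D (algebraMap A (Localization S) a)
        = algebraMap A (Localization S) (d a)) :
    ∀ J : Ideal (Localization S), (∀ x ∈ J, D x ∈ J) →
      ∀ x ∈ J.radical, D x ∈ J.radical :=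
  keigher_localization_general A d hKeigher S D hDmul hDcompat
end

section
/- In a Keigher ring, every minimal prime ideal is a differential ideal. -/
/-!
A minimal prime `p` is the radical of the ideal of `p`-torsion elements
`{x | s * x = 0 for some s ∉ p}`: an element of `p` becomes nilpotent in the zero-dimensional
local ring `A_p`. For any multiplicative set, the torsion ideal is differential, since
`t * x = 0` forces `t ^ 2 * ∂x = t * ∂(t * x) - (t * x) * ∂t = 0`. The Keigher property then
makes its radical `p` differential.
-/

namespace Submodule

variable {A : Type*} [CommRing A]

theorem mem_torsion'_submonoid_iff {S : Submonoid A} {x : A} :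
    x ∈ torsion' A A S ↔ ∃ s ∈ S, s * x = 0 := by
  simp [mem_torsion'_iff, Submonoid.smul_def]

theorem torsion'_primeCompl_le (p : Ideal A) [p.IsPrime] : torsion' A A p.primeCompl ≤ p := by
  intro x hx
  obtain ⟨s, hs, hsx⟩ := mem_torsion'_submonoid_iff.mp hx
  exact (‹p.IsPrime›.mem_or_mem (hsx ▸ p.zero_mem)).resolve_left hs

theorem le_radical_torsion'_primeCompl {p : Ideal A} [p.IsPrime] (hp : p ∈ minimalPrimes A) :
    p ≤ Ideal.radical (torsion' A A p.primeCompl) := by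
  intro a ha
  have hnil : IsNilpotent (algebraMap A (Localization.AtPrime p) a) := by
    have := Ring.KrullDimLE.of_isLocalization p hp (Localization.AtPrime p)
    rw [Ring.KrullDimLE.isNilpotent_iff_mem_maximalIdeal]
    exact (IsLocalization.AtPrime.to_map_mem_maximal_iff _ p a).mpr ha
  obtain ⟨n, hn⟩ := hnil
  rw [← map_pow, IsLocalization.map_eq_zero_iff p.primeCompl] at hn
  obtain ⟨s, hs⟩ := hn
  exact ⟨n, s, hs⟩

theorem radical_torsion'_primeCompl_eq {p : Ideal A} [hp' : p.IsPrime] (hp : p ∈ minimalPrimes A) :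
    Ideal.radical (torsion' A A p.primeCompl) = p :=
  le_antisymm (hp'.radical_le_iff.mpr (torsion'_primeCompl_le p))
    (le_radical_torsion'_primeCompl hp)

theorem map_mem_torsion'_of_leibniz {d : A → A} (hmul : ∀ a b : A, d (a * b) = a * d b + b * d a)
    (S : Submonoid A) {x : A} (hx : x ∈ torsion' A A S) : d x ∈ torsion' A A S := by
  obtain ⟨t, ht, htx⟩ := mem_torsion'_submonoid_iff.mp hx
  have hd0 : d 0 = 0 := by simpa using hmul 0 0
  refine mem_torsion'_submonoid_iff.mpr ⟨t * t, S.mul_mem ht ht, ?_⟩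
  calc t * t * d x = t * d (t * x) - (t * x) * d t := by rw [hmul]; ring
    _ = 0 := by rw [htx, hd0]; ring

end Submodule

theorem keigher_minimal_prime_differential_general (A : Type*) [CommRing A] (d : A → A)
    (hmul : ∀ a b : A, d (a * b) = a * d b + b * d a)
    (hKeigher : ∀ J : Ideal A, (∀ a ∈ J, d a ∈ J) → ∀ a ∈ J.radical, d a ∈ J.radical)
    (p : Ideal A) (hp : p ∈ minimalPrimes A) :
    ∀ a ∈ p, d a ∈ p := by
  have := hp.1.1
  rw [← Submodule.radical_torsion'_primeCompl_eq hp]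
  exact hKeigher _ fun _ ↦ Submodule.map_mem_torsion'_of_leibniz hmul p.primeCompl

/-- In a Keigher ring, every minimal prime ideal is a differential ideal. -/
theorem keigher_minimal_prime_differential (A : Type*) [CommRing A] (d : A → A)
    (hadd : ∀ a b : A, d (a + b) = d a + d b)
    (hmul : ∀ a b : A, d (a * b) = a * d b + b * d a)
    (hKeigher : ∀ J : Ideal A, (∀ a ∈ J, d a ∈ J) → ∀ a ∈ J.radical, d a ∈ J.radical)
    (p : Ideal A) (hp : p ∈ minimalPrimes A) :
    ∀ a ∈ p, d a ∈ p :=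
  keigher_minimal_prime_differential_general A d hmul hKeigher p hp
end
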